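/- arXiv:1201.2265 — 6 statements merged into one kernel-verified Lean document; each statement's English description precedes it below -/
import Mathlib

section
/- Let $P$ be a Markov transition operator with invariant probability $\pi$, let $f:\mathcal{X}\to[0,1]$ be measurable, $t>0$, and $S_n=\sum_{k=1}^n f(X_k)$ for the chain started from $\pi$. Then $\mathbb{E}_\pi[e^{tS_n}] = \langle e^{tf/2}, \widehat{P}_t^{\,n-1} e^{tf/2}\rangle_{L^2(\pi)}$, where $\widehat{P}_t g = e^{tf/2}P(e^{tf/2}g)$; consequently $\mathbb{E}_\pi[e^{tS_n}] \le \pi(e^{tf})\,\|\widehat{P}_t\|_{L^2(\pi)}^{n-1}$. -/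
/-!
Writing `w = e^{tf/2}`, the backward recursion `G (m+1) = w² · κ(G m)` is conjugate to the
weighted operator `P̂ g = w · κ(w g)`: by induction `G (m+1) = w · P̂ᵐ w` almost everywhere, where
invariance of `π` lets an a.e. identity under `π` be used inside `κ x` for a.e. `x`. Integrating
against `π` gives `⟪w, P̂ⁿ⁻¹ w⟫`, and Cauchy–Schwarz with `‖P̂ᵏ w‖ ≤ ‖P̂‖ᵏ ‖w‖` and
`‖w‖² = π(e^{tf})` gives the bound.
-/

open MeasureTheory ProbabilityTheory
open scoped RealInnerProductSpace

namespace MeasureTheory.L2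

variable {α : Type*} [MeasurableSpace α] {μ : Measure α}

lemma integral_mul_eq_inner (f g : Lp ℝ 2 μ) : ∫ x, f x * g x ∂μ = ⟪f, g⟫ := by
  simp only [inner_def, Real.inner_apply]

lemma norm_sq_eq_integral_mul_self (f : Lp ℝ 2 μ) : ‖f‖ ^ 2 = ∫ x, f x * f x ∂μ := by
  rw [integral_mul_eq_inner, real_inner_self_eq_norm_sq]

end MeasureTheory.L2

section OperatorPowers

variable {E : Type*} [NormedAddCommGroup E] [InnerProductSpace ℝ E]

lemma ContinuousLinearMap.norm_pow_apply_le (T : E →L[ℝ] E) (v : E) (k : ℕ) :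
    ‖(T ^ k) v‖ ≤ ‖T‖ ^ k * ‖v‖ := by
  induction k with
  | zero => simp
  | succ k ih =>
    calc ‖(T ^ (k + 1)) v‖ = ‖T ((T ^ k) v)‖ := by rw [pow_succ', mul_apply_eq_comp]
      _ ≤ ‖T‖ * (‖T‖ ^ k * ‖v‖) := T.le_opNorm_of_le ih
      _ = ‖T‖ ^ (k + 1) * ‖v‖ := by ring

lemma real_inner_pow_apply_self_le (T : E →L[ℝ] E) (v : E) (k : ℕ) :
    ⟪v, (T ^ k) v⟫ ≤ ‖v‖ ^ 2 * ‖T‖ ^ k :=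
  calc ⟪v, (T ^ k) v⟫ ≤ ‖v‖ * (‖T‖ ^ k * ‖v‖) :=
        (real_inner_le_norm _ _).trans (by gcongr; exact T.norm_pow_apply_le v k)
    _ = ‖v‖ ^ 2 * ‖T‖ ^ k := by ring

end OperatorPowers

lemma ae_eq_mul_pow_apply_of_backward_recursion {X : Type*} [MeasurableSpace X]
    {π : Measure X} {κ : Kernel X X} (hinv : π.bind κ = π)
    (w : X → ℝ) (G : ℕ → X → ℝ) (hG1 : ∀ x, G 1 x = w x * w x)
    (hGS : ∀ m, 1 ≤ m → ∀ x, G (m + 1) x = w x * w x * ∫ y, G m y ∂(κ x))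
    (T : Lp ℝ 2 π →L[ℝ] Lp ℝ 2 π)
    (hT : ∀ g : Lp ℝ 2 π, T g =ᵐ[π] fun x => w x * ∫ y, w y * g y ∂(κ x))
    (V : Lp ℝ 2 π) (hV : V =ᵐ[π] w) (m : ℕ) :
    G (m + 1) =ᵐ[π] fun x => w x * (T ^ m) V x := by
  induction m with
  | zero =>
    filter_upwards [hV] with x hx
    simp [hG1, hx]
  | succ m ih =>
    have ih_kernel : ∀ᵐ x ∂π, G (m + 1) =ᵐ[κ x] fun y => w y * (T ^ m) V y :=
      Measure.ae_ae_of_ae_comp (hinv.symm ▸ ih)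
    filter_upwards [ih_kernel, hT ((T ^ m) V)] with x hx hTx
    rw [hGS (m + 1) (Nat.le_add_left 1 m), integral_congr_ae hx, pow_succ',
      mul_apply_eq_comp, hTx]
    ring

theorem hoeffding_stmt3_general
    {X : Type*} [MeasurableSpace X] (π : Measure X)
    (κ : Kernel X X) (hinv : π.bind κ = π)
    (f : X → ℝ)
    (t : ℝ)
    (G : ℕ → X → ℝ)
    (hG1 : ∀ x, G 1 x = Real.exp (t * f x))
    (hGS : ∀ m, 1 ≤ m → ∀ x, G (m + 1) x = Real.exp (t * f x) * ∫ y, G m y ∂(κ x))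
    (Phat : Lp ℝ 2 π →L[ℝ] Lp ℝ 2 π)
    (hPhat : ∀ g : Lp ℝ 2 π, Phat g =ᵐ[π] fun x =>
      Real.exp (t * f x / 2) * ∫ y, Real.exp (t * f y / 2) * g y ∂(κ x))
    (V : Lp ℝ 2 π) (hV : V =ᵐ[π] fun x => Real.exp (t * f x / 2))
    (n : ℕ) (hn : 1 ≤ n) :
    (∫ x, G n x ∂π) = ∫ x, V x * ((Phat ^ (n - 1)) V) x ∂π ∧
    (∫ x, G n x ∂π) ≤ (∫ x, Real.exp (t * f x) ∂π) * ‖Phat‖ ^ (n - 1) := by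
  obtain ⟨k, rfl⟩ := Nat.exists_eq_add_of_le' hn
  rw [Nat.add_sub_cancel]
  have exp_eq_mul_self :
      ∀ x, Real.exp (t * f x) = Real.exp (t * f x / 2) * Real.exp (t * f x / 2) :=
    fun x => by rw [← Real.exp_add, add_halves]
  have hGk := ae_eq_mul_pow_apply_of_backward_recursion hinv _ G
    (fun x => (hG1 x).trans (exp_eq_mul_self x)) (fun m hm x => by rw [hGS m hm, exp_eq_mul_self])
    Phat hPhat V hV k
  have hmgf : ∫ x, G (k + 1) x ∂π = ∫ x, V x * (Phat ^ k) V x ∂π := by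
    refine integral_congr_ae ?_
    filter_upwards [hGk, hV] with x hx hVx
    rw [hx, hVx]
  have hnormV : ‖V‖ ^ 2 = ∫ x, Real.exp (t * f x) ∂π := by
    rw [L2.norm_sq_eq_integral_mul_self]
    refine integral_congr_ae ?_
    filter_upwards [hV] with x hx
    rw [hx, exp_eq_mul_self]
  refine ⟨hmgf, ?_⟩
  rw [hmgf, L2.integral_mul_eq_inner, ← hnormV]
  exact real_inner_pow_apply_self_le Phat V k

/-- for a Markov chain with kernel `κ` started from the invariant measure `π`,
`E_π[e^{tSₙ}] = ⟨e^{tf/2}, P̂ₜ^{n-1} e^{tf/2}⟩` and hence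
`E_π[e^{tSₙ}] ≤ π(e^{tf}) ‖P̂ₜ‖^{n-1}`.  Here the moment generating function is expressed
through the backward recursion `G 1 = e^{tf}`, `G (m+1) x = e^{tf(x)} ∫ G m dκ(x,·)`,
so that `E_π[e^{tSₙ}] = ∫ G n dπ`. -/
theorem hoeffding_stmt3
    {X : Type*} [MeasurableSpace X] (π : Measure X) [IsProbabilityMeasure π]
    (κ : Kernel X X) [IsMarkovKernel κ] (hinv : π.bind κ = π)
    (f : X → ℝ) (hf : Measurable f) (hf01 : ∀ x, f x ∈ Set.Icc (0 : ℝ) 1)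
    (t : ℝ) (ht : 0 < t)
    (G : ℕ → X → ℝ)
    (hG1 : ∀ x, G 1 x = Real.exp (t * f x))
    (hGS : ∀ m, 1 ≤ m → ∀ x, G (m + 1) x = Real.exp (t * f x) * ∫ y, G m y ∂(κ x))
    (Phat : Lp ℝ 2 π →L[ℝ] Lp ℝ 2 π)
    (hPhat : ∀ g : Lp ℝ 2 π, Phat g =ᵐ[π] fun x =>
      Real.exp (t * f x / 2) * ∫ y, Real.exp (t * f y / 2) * g y ∂(κ x))
    (V : Lp ℝ 2 π) (hV : V =ᵐ[π] fun x => Real.exp (t * f x / 2))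
    (n : ℕ) (hn : 1 ≤ n) :
    (∫ x, G n x ∂π) = ∫ x, V x * ((Phat ^ (n - 1)) V) x ∂π ∧
    (∫ x, G n x ∂π) ≤ (∫ x, Real.exp (t * f x) ∂π) * ‖Phat‖ ^ (n - 1) :=
  hoeffding_stmt3_general π κ hinv f t G hG1 hGS Phat hPhat V hV n hn
end

section
/- Let $\pi$ be a probability measure, $f:\mathcal{X}\to[0,1]$ measurable, $0\le\lambda<1$, $t>0$, and suppose $r>\lambda\,\mathrm{ess\,sup}_x e^{tf(x)}$ satisfies $\int_{\mathcal{X}}\frac{(1-\lambda)e^{tf(x)}}{r-\lambda e^{tf(x)}}\,\pi(dx)=1$. Then the function $g(x)=\frac{e^{tf(x)/2}}{r-\lambda e^{tf(x)}}$ is $\pi$-a.s. positive, lies in $L^2(\pi)$, and satisfies $\widehat{Q}_t g = r g$ $\pi$-a.s., where $\widehat{Q}_t h(x) = e^{tf(x)/2}\big((1-\lambda)\pi(e^{tf/2}h)+\lambda e^{tf(x)/2}h(x)\big)$. -/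
/-!
Write `φ = e^{tf/2}`, so that `g = φ / (r - λφ²)`. Since `f` is bounded, so is `φ`, and
`r > λ ess sup φ²` keeps the denominator `r - λφ²` a.e. bounded below by `r - λ ess sup φ² > 0`;
hence `g` is a.e. positive and bounded, so in `L²`. The normalization says exactly
`(1 - λ) π(φ g) = 1`, after which `Q̂ₜ g = φ (1 + λφg) = r g` is the identity
`φ (r - λφ²) + λφ³ = rφ`.
-/

open MeasureTheory Filter

section

variable {X : Type*} [MeasurableSpace X] {π : Measure X}

lemma ae_sub_mul_essSup_le {h : X → ℝ} (hbdd : IsBoundedUnder (· ≤ ·) (ae π) h)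
    {lam : ℝ} (hlam : 0 ≤ lam) (r : ℝ) :
    ∀ᵐ x ∂π, r - lam * essSup h π ≤ r - lam * h x := by
  filter_upwards [ae_le_essSup hbdd] with x hx
  linarith [mul_le_mul_of_nonneg_left hx hlam]

lemma memLp_div_of_abs_le_of_le [IsFiniteMeasure π] {φ ψ : X → ℝ}
    (hφ : Measurable φ) (hψ : Measurable ψ) {C δ : ℝ} (hδ : 0 < δ)
    (hφC : ∀ᵐ x ∂π, |φ x| ≤ C) (hψδ : ∀ᵐ x ∂π, δ ≤ ψ x) (p : ENNReal) :
    MemLp (fun x => φ x / ψ x) p π := by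
  refine MemLp.of_bound (hφ.div hψ).aestronglyMeasurable (C / δ) ?_
  filter_upwards [hφC, hψδ] with x hxC hxδ
  rw [Real.norm_eq_abs, abs_div, abs_of_pos (hδ.trans_le hxδ)]
  exact div_le_div₀ ((abs_nonneg _).trans hxC) hxC hδ hxδ

lemma tilted_eigen_eq {φ : X → ℝ} {lam r : ℝ}
    (hnorm : ∫ y, (1 - lam) * φ y ^ 2 / (r - lam * φ y ^ 2) ∂π = 1)
    {x : X} (hx : r - lam * φ x ^ 2 ≠ 0) :
    φ x * ((1 - lam) * (∫ y, φ y * (φ y / (r - lam * φ y ^ 2)) ∂π)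
        + lam * φ x * (φ x / (r - lam * φ x ^ 2))) = r * (φ x / (r - lam * φ x ^ 2)) := by
  have hφg : (1 - lam) * ∫ y, φ y * (φ y / (r - lam * φ y ^ 2)) ∂π = 1 := by
    rw [← integral_const_mul]
    exact (integral_congr_ae (.of_forall fun y => by ring)).trans hnorm
  rw [hφg]
  linear_combination (mul_div_cancel₀ (φ x) hx).symm

end

theorem hoeffding_stmt4_general
    {X : Type*} [MeasurableSpace X] (π : Measure X) [IsProbabilityMeasure π]
    (f : X → ℝ) (hf : Measurable f) (hf01 : ∀ x, f x ∈ Set.Icc (0 : ℝ) 1)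
    (lam : ℝ) (hlam0 : 0 ≤ lam) (t : ℝ)
    (r : ℝ) (hr : r > lam * essSup (fun x => Real.exp (t * f x)) π)
    (hreq : ∫ x, (1 - lam) * Real.exp (t * f x) / (r - lam * Real.exp (t * f x)) ∂π = 1)
    (g : X → ℝ)
    (hg : ∀ x, g x = Real.exp (t * f x / 2) / (r - lam * Real.exp (t * f x))) :
    (∀ᵐ x ∂π, 0 < g x) ∧ MemLp g 2 π ∧
    (∀ᵐ x ∂π, Real.exp (t * f x / 2) *
        ((1 - lam) * (∫ y, Real.exp (t * f y / 2) * g y ∂π)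
          + lam * Real.exp (t * f x / 2) * g x) = r * g x) := by
  set φ : X → ℝ := fun x => Real.exp (t * f x / 2)
  have hφ_sq (x : X) : Real.exp (t * f x) = φ x ^ 2 := by
    rw [← Real.exp_nat_mul]; ring_nf
  have hφ_bound (x : X) : |φ x| ≤ Real.exp (|t| / 2) := by
    have htf : t * f x ≤ |t| := by
      calc t * f x ≤ |t| * f x := mul_le_mul_of_nonneg_right (le_abs_self t) (hf01 x).1
        _ ≤ |t| := mul_le_of_le_one_right (abs_nonneg t) (hf01 x).2
    rw [abs_of_pos (Real.exp_pos _)]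
    exact Real.exp_le_exp.2 (by linarith)
  simp only [hφ_sq] at hr hreq hg
  obtain rfl : g = fun x => φ x / (r - lam * φ x ^ 2) := funext hg
  have hbdd : IsBoundedUnder (· ≤ ·) (ae π) (fun x => φ x ^ 2) :=
    isBoundedUnder_of_eventually_le (.of_forall fun x => sq_le_sq' (abs_le.1 (hφ_bound x)).1
      (abs_le.1 (hφ_bound x)).2)
  have hden := ae_sub_mul_essSup_le hbdd hlam0 r
  have hδ : 0 < r - lam * essSup (fun x => φ x ^ 2) π := sub_pos.2 hr
  have hφ_meas : Measurable φ := ((hf.const_mul t).div_const 2).exp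
  refine ⟨hden.mono fun x hx => div_pos (Real.exp_pos _) (hδ.trans_le hx),
    memLp_div_of_abs_le_of_le hφ_meas (by fun_prop) hδ (.of_forall hφ_bound) hden 2,
    hden.mono fun x hx => tilted_eigen_eq hreq (hδ.trans_le hx).ne'⟩

/-- if `r > λ esssup e^{tf}` solves `∫ (1-λ)e^{tf}/(r - λe^{tf}) dπ = 1`, then
`g(x) = e^{tf(x)/2}/(r - λe^{tf(x)})` is a.s. positive, in `L²(π)`, and is an eigenfunction
of the tilted operator `Q̂ₜ` with eigenvalue `r`. -/
theorem hoeffding_stmt4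
    {X : Type*} [MeasurableSpace X] (π : Measure X) [IsProbabilityMeasure π]
    (f : X → ℝ) (hf : Measurable f) (hf01 : ∀ x, f x ∈ Set.Icc (0 : ℝ) 1)
    (lam : ℝ) (hlam0 : 0 ≤ lam) (hlam1 : lam < 1) (t : ℝ) (ht : 0 < t)
    (r : ℝ) (hr : r > lam * essSup (fun x => Real.exp (t * f x)) π)
    (hreq : ∫ x, (1 - lam) * Real.exp (t * f x) / (r - lam * Real.exp (t * f x)) ∂π = 1)
    (g : X → ℝ)
    (hg : ∀ x, g x = Real.exp (t * f x / 2) / (r - lam * Real.exp (t * f x))) :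
    (∀ᵐ x ∂π, 0 < g x) ∧ MemLp g 2 π ∧
    (∀ᵐ x ∂π, Real.exp (t * f x / 2) *
        ((1 - lam) * (∫ y, Real.exp (t * f y / 2) * g y ∂π)
          + lam * Real.exp (t * f x / 2) * g x) = r * g x) :=
  hoeffding_stmt4_general π f hf hf01 lam hlam0 t r hr hreq g hg
end

section
/- Let $\pi$ be a probability measure, $t>0$, $0\le\lambda<1$, $f_k$ a measurable function with values in $[0,1]$, and suppose $r_{t,k}>\lambda\,\mathrm{ess\,sup}\,e^{tf_k}$ solves $\int\frac{(1-\lambda)e^{tf_k}}{r_{t,k}-\lambda e^{tf_k}}d\pi=1$. Then the operator norm of $\widehat{Q}_{t,k}$ on $L^2(\pi)$ equals $r_{t,k}$, where $\widehat{Q}_{t,k}h(x)=e^{tf_k(x)/2}\big((1-\lambda)\pi(e^{tf_k/2}h)+\lambda e^{tf_k(x)/2}h(x)\big)$. -/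
/-!
With `u = e^{t f_k / 2}` and `w = λ e^{t f_k}`, the operator is `Q̂ = (1 - λ) u ⟨u, ·⟩ + w`, a
positive rank-one perturbation of a multiplication operator. The normalisation of `r` says
exactly that `g = u / (r - w)` solves `Q̂ g = r g`, so `r ≤ ‖Q̂‖`. Conversely `Q̂` is symmetric and
positive, so its norm is the supremum of `⟨Q̂ h, h⟩ / ‖h‖²`, and
`r ‖h‖² - ⟨Q̂ h, h⟩ = ∫ (r - w) h² - (1 - λ) ⟨u, h⟩² ≥ 0`
by the Cauchy–Schwarz inequality with weight `r - w`, since `(1 - λ) ∫ u² / (r - w) = 1`.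
-/

open MeasureTheory

namespace ContinuousLinearMap

theorem norm_le_opNorm_of_apply_eq_smul {𝕜 E : Type*} [NontriviallyNormedField 𝕜]
    [NormedAddCommGroup E] [NormedSpace 𝕜 E] {T : E →L[𝕜] E} {v : E} {c : 𝕜}
    (hv : v ≠ 0) (hTv : T v = c • v) : ‖c‖ ≤ ‖T‖ := by
  have h := T.le_opNorm v
  rw [hTv, norm_smul] at h
  exact le_of_mul_le_mul_right h (norm_pos_iff.2 hv)

theorem opNorm_le_of_abs_inner_self_le {E : Type*} [NormedAddCommGroup E]
    [InnerProductSpace ℝ E] {T : E →L[ℝ] E} (hT : T.IsSymmetric) {M : ℝ} (hM : 0 ≤ M)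
    (h : ∀ x, |inner ℝ (T x) x| ≤ M * ‖x‖ ^ 2) : ‖T‖ ≤ M := by
  rw [T.norm_eq_iSup_rayleighQuotient hT]
  refine ciSup_le fun x => ?_
  rcases eq_or_ne x 0 with rfl | hx
  · simpa using hM
  · rw [rayleighQuotient, reApplyInnerSelf_apply, RCLike.re_to_real, abs_div, abs_sq,
      div_le_iff₀ (by positivity)]
    exact h x

end ContinuousLinearMap

theorem exp_mul_le_exp_abs {c y : ℝ} (hy : |y| ≤ 1) : Real.exp (c * y) ≤ Real.exp |c| := by
  refine Real.exp_le_exp.2 ((le_abs_self _).trans ?_)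
  rw [abs_mul]
  exact mul_le_of_le_one_right (abs_nonneg c) hy

section

variable {X : Type*} [MeasurableSpace X] {μ : Measure X}

/-- Weighted Cauchy–Schwarz, from `∫ d (h - c u / d)² ≥ 0` with `c = a ∫ u h`. -/
theorem mul_sq_integral_mul_le_integral_mul_sq {u d h : X → ℝ} {a : ℝ}
    (hd : ∀ᵐ x ∂μ, 0 < d x) (huh : Integrable (fun x => u x * h x) μ)
    (hdh : Integrable (fun x => d x * h x ^ 2) μ) (ha : a * ∫ x, u x ^ 2 / d x ∂μ = 1) :
    a * (∫ x, u x * h x ∂μ) ^ 2 ≤ ∫ x, d x * h x ^ 2 ∂μ := by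
  have hud : Integrable (fun x => u x ^ 2 / d x) μ :=
    Integrable.of_integral_ne_zero (right_ne_zero_of_mul_eq_one ha)
  set I := ∫ x, u x * h x ∂μ
  set c := a * I
  have hsq : ∀ᵐ x ∂μ, 0 ≤ d x * h x ^ 2 - c * (2 * (u x * h x)) + c ^ 2 * (u x ^ 2 / d x) := by
    filter_upwards [hd] with x hx
    have : d x * h x ^ 2 - c * (2 * (u x * h x)) + c ^ 2 * (u x ^ 2 / d x)
        = d x * (h x - c * u x / d x) ^ 2 := by
      field_simp
      ring
    rw [this]
    positivity
  have hint := integral_nonneg_of_ae hsq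
  rw [integral_add (f := fun x => d x * h x ^ 2 - c * (2 * (u x * h x)))
      (hdh.sub ((huh.const_mul 2).const_mul c)) (hud.const_mul _),
    integral_sub hdh ((huh.const_mul 2).const_mul c), integral_const_mul, integral_const_mul,
    integral_const_mul] at hint
  have hc : c ^ 2 * ∫ x, u x ^ 2 / d x ∂μ = a * I ^ 2 := by
    linear_combination (a * I ^ 2) * ha
  linarith

/-- `T = a u ⟨u, ·⟩ + w` on `L²(μ)`; the paper's `Q̂_{t,k}` has `a = 1 - λ`, `u = e^{t f_k / 2}`
and `w = λ e^{t f_k}`. -/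
def IsRankOneAddMul (T : Lp ℝ 2 μ →L[ℝ] Lp ℝ 2 μ) (a : ℝ) (u w : X → ℝ) : Prop :=
  ∀ h : Lp ℝ 2 μ, T h =ᵐ[μ] fun x => a * u x * (∫ y, u y * h y ∂μ) + w x * h x

namespace IsRankOneAddMul

variable {T : Lp ℝ 2 μ →L[ℝ] Lp ℝ 2 μ} {a r s : ℝ} {u w : X → ℝ}

theorem inner_apply (hT : IsRankOneAddMul T a u w) (hu : MemLp u 2 μ) (hw : MemLp w ⊤ μ)
    (h k : Lp ℝ 2 μ) :
    inner ℝ (T h) k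
      = a * (∫ x, u x * h x ∂μ) * (∫ x, u x * k x ∂μ) + ∫ x, w x * (h x * k x) ∂μ := by
  have huk : Integrable (fun x => u x * k x) μ := hu.integrable_mul (Lp.memLp k)
  have hwhk : Integrable (fun x => w x * (h x * k x)) μ :=
    ((Lp.memLp h).integrable_mul (Lp.memLp k)).mul_of_top_right hw
  rw [L2.inner_def, ← integral_const_mul, ← integral_add (huk.const_mul _) hwhk]
  refine integral_congr_ae ?_
  filter_upwards [hT h] with x hx
  simp only [hx, RCLike.inner_apply, conj_trivial]
  ring

theorem isSymmetric (hT : IsRankOneAddMul T a u w) (hu : MemLp u 2 μ) (hw : MemLp w ⊤ μ) :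
    (T : Lp ℝ 2 μ →ₗ[ℝ] Lp ℝ 2 μ).IsSymmetric := fun h k => by
  show inner ℝ (T h) k = inner ℝ h (T k)
  rw [real_inner_comm (T k), hT.inner_apply hu hw, hT.inner_apply hu hw]
  simp only [mul_comm (h _) (k _)]
  ring

theorem inner_apply_self_nonneg (hT : IsRankOneAddMul T a u w) (hu : MemLp u 2 μ)
    (hw : MemLp w ⊤ μ) (ha : 0 ≤ a) (hw0 : ∀ᵐ x ∂μ, 0 ≤ w x) (h : Lp ℝ 2 μ) :
    0 ≤ inner ℝ (T h) h := by
  rw [hT.inner_apply hu hw, mul_assoc, ← sq]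
  have : 0 ≤ ∫ x, w x * (h x * h x) ∂μ := integral_nonneg_of_ae <| by
    filter_upwards [hw0] with x hx using mul_nonneg hx (mul_self_nonneg _)
  positivity

theorem inner_apply_self_le (hT : IsRankOneAddMul T a u w) (hu : MemLp u 2 μ)
    (hw : MemLp w ⊤ μ) (hws : ∀ᵐ x ∂μ, w x < r)
    (ha : a * ∫ x, u x ^ 2 / (r - w x) ∂μ = 1) (h : Lp ℝ 2 μ) :
    inner ℝ (T h) h ≤ r * ‖h‖ ^ 2 := by
  have hh2 : Integrable (fun x => h x * h x) μ := (Lp.memLp h).integrable_mul (Lp.memLp h)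
  have hwhh : Integrable (fun x => w x * (h x * h x)) μ := hh2.mul_of_top_right hw
  have hnorm : ‖h‖ ^ 2 = ∫ x, h x * h x ∂μ := by
    rw [← real_inner_self_eq_norm_sq, L2.inner_def]
    simp only [RCLike.inner_apply, conj_trivial]
  have hdh : Integrable (fun x => (r - w x) * h x ^ 2) μ :=
    ((hh2.const_mul r).sub hwhh).congr (ae_of_all _ fun x => by simp only [Pi.sub_apply]; ring)
  have hCS := mul_sq_integral_mul_le_integral_mul_sq (hws.mono fun x hx => sub_pos.2 hx)
    (hu.integrable_mul (Lp.memLp h)) hdh ha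
  have hsplit : ∫ x, (r - w x) * h x ^ 2 ∂μ
      = r * ∫ x, h x * h x ∂μ - ∫ x, w x * (h x * h x) ∂μ := by
    rw [← integral_const_mul, ← integral_sub (hh2.const_mul r) hwhh]
    congr 1 with x
    ring
  rw [hT.inner_apply hu hw, hnorm]
  linarith

theorem exists_apply_eq_smul (hT : IsRankOneAddMul T a u w) (hu : MemLp u 2 μ)
    (hw : AEStronglyMeasurable w μ) (hws : ∀ᵐ x ∂μ, w x ≤ s) (hsr : s < r)
    (ha : a * ∫ x, u x ^ 2 / (r - w x) ∂μ = 1) :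
    ∃ g : Lp ℝ 2 μ, g ≠ 0 ∧ T g = r • g := by
  have hg : MemLp (fun x => u x / (r - w x)) 2 μ := by
    refine hu.of_le_mul (c := (r - s)⁻¹)
      (hu.1.aemeasurable.div (aemeasurable_const.sub hw.aemeasurable)).aestronglyMeasurable ?_
    filter_upwards [hws] with x hx
    rw [norm_div, div_eq_inv_mul, Real.norm_of_nonneg (by linarith : 0 ≤ r - w x)]
    gcongr
  have hug : ∫ x, u x * hg.toLp _ x ∂μ = ∫ x, u x ^ 2 / (r - w x) ∂μ := by
    refine integral_congr_ae ?_
    filter_upwards [hg.coeFn_toLp] with x hx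
    rw [hx]
    ring
  refine ⟨hg.toLp _, fun h0 => ?_, Lp.ext ?_⟩
  · have hzero : (hg.toLp _ : X → ℝ) =ᵐ[μ] 0 := h0 ▸ Lp.coeFn_zero ℝ 2 μ
    have : ∫ x, u x * hg.toLp _ x ∂μ = 0 := by
      refine (integral_congr_ae ?_).trans (integral_zero X ℝ)
      filter_upwards [hzero] with x hx
      simp [hx]
    rw [hug] at this
    simp [this] at ha
  · filter_upwards [hT (hg.toLp _), Lp.coeFn_smul r (hg.toLp _), hg.coeFn_toLp, hws]
      with x hTx hsmul hx hwx
    rw [hTx, hsmul, Pi.smul_apply, hx, hug, smul_eq_mul]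
    have : r - w x ≠ 0 := by linarith
    field_simp
    linear_combination (r - w x) * u x * ha

theorem norm_eq (hT : IsRankOneAddMul T a u w) (hu : MemLp u 2 μ) (hw : MemLp w ⊤ μ)
    (hw0 : ∀ᵐ x ∂μ, 0 ≤ w x) (hws : ∀ᵐ x ∂μ, w x ≤ s) (hsr : s < r)
    (ha : a * ∫ x, u x ^ 2 / (r - w x) ∂μ = 1) : ‖T‖ = r := by
  have hwr : ∀ᵐ x ∂μ, w x < r := hws.mono fun x hx => hx.trans_lt hsr
  have ha0 : 0 ≤ a := by
    have : 0 ≤ ∫ x, u x ^ 2 / (r - w x) ∂μ := integral_nonneg_of_ae <| by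
      filter_upwards [hwr] with x hx using div_nonneg (sq_nonneg _) (sub_pos.2 hx).le
    nlinarith
  obtain ⟨g, hg0, hTg⟩ := hT.exists_apply_eq_smul hu hw.1 hws hsr ha
  have hr : 0 ≤ r := by
    have := hT.inner_apply_self_nonneg hu hw ha0 hw0 g
    rw [hTg, real_inner_smul_left, real_inner_self_eq_norm_sq] at this
    exact nonneg_of_mul_nonneg_left this (by positivity)
  refine le_antisymm ?_ ?_
  · refine ContinuousLinearMap.opNorm_le_of_abs_inner_self_le (hT.isSymmetric hu hw) hr
      fun h => ?_
    rw [abs_of_nonneg (hT.inner_apply_self_nonneg hu hw ha0 hw0 h)]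
    exact hT.inner_apply_self_le hu hw hwr ha h
  · simpa [abs_of_nonneg hr] using ContinuousLinearMap.norm_le_opNorm_of_apply_eq_smul hg0 hTg

end IsRankOneAddMul

end

theorem hoeffding_stmt6_general
    {X : Type*} [MeasurableSpace X] (π : Measure X) [IsProbabilityMeasure π]
    (fk : X → ℝ) (hfk : Measurable fk) (hfk01 : ∀ x, fk x ∈ Set.Icc (0 : ℝ) 1)
    (lam : ℝ) (hlam0 : 0 ≤ lam) (t : ℝ)
    (r : ℝ) (hr : r > lam * essSup (fun x => Real.exp (t * fk x)) π)
    (hreq : ∫ x, (1 - lam) * Real.exp (t * fk x) / (r - lam * Real.exp (t * fk x)) ∂π = 1)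
    (Qhat : Lp ℝ 2 π →L[ℝ] Lp ℝ 2 π)
    (hQhat : ∀ h : Lp ℝ 2 π, Qhat h =ᵐ[π] fun x => Real.exp (t * fk x / 2) *
      ((1 - lam) * ∫ y, Real.exp (t * fk y / 2) * h y ∂π
        + lam * Real.exp (t * fk x / 2) * h x)) :
    ‖Qhat‖ = r := by
  set u : X → ℝ := fun x => Real.exp (t * fk x / 2)
  set w : X → ℝ := fun x => lam * Real.exp (t * fk x)
  have hu_sq (x : X) : Real.exp (t * fk x / 2) ^ 2 = Real.exp (t * fk x) := by
    rw [← Real.exp_nat_mul]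
    ring_nf
  have hfk1 (x : X) : |fk x| ≤ 1 := abs_le.2 ⟨by linarith [(hfk01 x).1], (hfk01 x).2⟩
  have hexp_le (x : X) : Real.exp (t * fk x) ≤ Real.exp |t| := exp_mul_le_exp_abs (hfk1 x)
  have hu : MemLp u 2 π := by
    refine MemLp.of_bound (by fun_prop) (Real.exp |t / 2|) (ae_of_all _ fun x => ?_)
    rw [Real.norm_of_nonneg (Real.exp_pos _).le, mul_div_right_comm]
    exact exp_mul_le_exp_abs (hfk1 x)
  have hw : MemLp w ⊤ π := by
    refine memLp_top_of_bound (by fun_prop) (lam * Real.exp |t|) (ae_of_all _ fun x => ?_)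
    rw [Real.norm_of_nonneg (by positivity)]
    exact mul_le_mul_of_nonneg_left (hexp_le x) hlam0
  have hws : ∀ᵐ x ∂π, w x ≤ lam * essSup (fun x => Real.exp (t * fk x)) π := by
    filter_upwards [ae_le_essSup (Filter.isBoundedUnder_of ⟨_, hexp_le⟩)]
      with x hx using mul_le_mul_of_nonneg_left hx hlam0
  have hT : IsRankOneAddMul Qhat (1 - lam) u w := fun h => (hQhat h).mono fun x hx => by
    simp only [hx, u, w, ← hu_sq]
    ring
  have ha : (1 - lam) * ∫ x, u x ^ 2 / (r - w x) ∂π = 1 := by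
    rw [← integral_const_mul]
    refine Eq.trans (integral_congr_ae (ae_of_all _ fun x => ?_)) hreq
    simp only [u, w, hu_sq]
    ring
  exact hT.norm_eq hu hw (ae_of_all _ fun x => by positivity) hws hr ha

/-- Lemma 4.2(i): if `r > λ esssup e^{tf_k}` solves
`∫ (1-λ)e^{tf_k}/(r - λe^{tf_k}) dπ = 1`, then the operator norm of the tilted operator
`Q̂_{t,k}` on `L²(π)` equals `r`. -/
theorem hoeffding_stmt6
    {X : Type*} [MeasurableSpace X] (π : Measure X) [IsProbabilityMeasure π]
    (fk : X → ℝ) (hfk : Measurable fk) (hfk01 : ∀ x, fk x ∈ Set.Icc (0 : ℝ) 1)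
    (lam : ℝ) (hlam0 : 0 ≤ lam) (hlam1 : lam < 1) (t : ℝ) (ht : 0 < t)
    (r : ℝ) (hr : r > lam * essSup (fun x => Real.exp (t * fk x)) π)
    (hreq : ∫ x, (1 - lam) * Real.exp (t * fk x) / (r - lam * Real.exp (t * fk x)) ∂π = 1)
    (Qhat : Lp ℝ 2 π →L[ℝ] Lp ℝ 2 π)
    (hQhat : ∀ h : Lp ℝ 2 π, Qhat h =ᵐ[π] fun x => Real.exp (t * fk x / 2) *
      ((1 - lam) * ∫ y, Real.exp (t * fk y / 2) * h y ∂π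
        + lam * Real.exp (t * fk x / 2) * h x)) :
    ‖Qhat‖ = r :=
  hoeffding_stmt6_general π fk hfk hfk01 lam hlam0 t r hr hreq Qhat hQhat
end

section
/- Let $\pi$ be a probability measure, $0\le\lambda<1$, $t>0$, and let $f, f'$ be measurable functions with $0\le f\le f'\le 1$ pointwise. Then $\|\widehat{Q}_t^{(f)}\|_{L^2(\pi)} \le \|\widehat{Q}_t^{(f')}\|_{L^2(\pi)}$, where $\widehat{Q}_t^{(g)}h(x)=e^{tg(x)/2}\big((1-\lambda)\pi(e^{tg/2}h)+\lambda e^{tg(x)/2}h(x)\big)$. -/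
open MeasureTheory

/-- monotonicity of the norm of the tilted operator `Q̂ₜ^{(f)}` in `f`:
if `0 ≤ f ≤ f' ≤ 1` pointwise then `‖Q̂ₜ^{(f)}‖ ≤ ‖Q̂ₜ^{(f')}‖`. -/
theorem hoeffding_stmt8
    {X : Type*} [MeasurableSpace X] (π : Measure X) [IsProbabilityMeasure π]
    (lam : ℝ) (hlam0 : 0 ≤ lam) (hlam1 : lam < 1) (t : ℝ) (ht : 0 < t)
    (f f' : X → ℝ) (hf : Measurable f) (hf' : Measurable f')
    (h0f : ∀ x, 0 ≤ f x) (hff' : ∀ x, f x ≤ f' x) (hf'1 : ∀ x, f' x ≤ 1)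
    (Qf Qf' : Lp ℝ 2 π →L[ℝ] Lp ℝ 2 π)
    (hQf : ∀ h : Lp ℝ 2 π, Qf h =ᵐ[π] fun x => Real.exp (t * f x / 2) *
      ((1 - lam) * ∫ y, Real.exp (t * f y / 2) * h y ∂π
        + lam * Real.exp (t * f x / 2) * h x))
    (hQf' : ∀ h : Lp ℝ 2 π, Qf' h =ᵐ[π] fun x => Real.exp (t * f' x / 2) *
      ((1 - lam) * ∫ y, Real.exp (t * f' y / 2) * h y ∂π
        + lam * Real.exp (t * f' x / 2) * h x)) :
    ‖Qf‖ ≤ ‖Qf'‖ := by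
  refine ContinuousLinearMap.opNorm_le_bound _ (norm_nonneg _) fun h => ?_
  set g : X → ℝ := fun x => Real.exp (t * f x / 2) with hg
  set g' : X → ℝ := fun x => Real.exp (t * f' x / 2) with hg'
  have hgpos : ∀ x, 0 < g x := fun x => Real.exp_pos _
  have hg'pos : ∀ x, 0 < g' x := fun x => Real.exp_pos _
  have hgle : ∀ x, g x ≤ g' x := fun x =>
    Real.exp_le_exp.2 (by nlinarith [hff' x])
  have hgbd : ∀ x, ‖g x‖ ≤ Real.exp (t / 2) := fun x => by
    rw [Real.norm_eq_abs, abs_of_pos (hgpos x)]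
    exact Real.exp_le_exp.2 (by nlinarith [hf'1 x, hff' x])
  have hg'bd : ∀ x, ‖g' x‖ ≤ Real.exp (t / 2) := fun x => by
    rw [Real.norm_eq_abs, abs_of_pos (hg'pos x)]
    exact Real.exp_le_exp.2 (by nlinarith [hf'1 x])
  have hgm : Measurable g := (Real.measurable_exp.comp ((measurable_const.mul hf).div_const 2))
  have hg'm : Measurable g' := (Real.measurable_exp.comp ((measurable_const.mul hf').div_const 2))
  have hhint : Integrable (fun y => h y) π :=
    (Lp.memLp h).integrable one_le_two
  have habsint : Integrable (fun y => |h y|) π := hhint.abs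
  have hgh : Integrable (fun y => g y * h y) π :=
    hhint.bdd_mul hgm.aestronglyMeasurable (Filter.Eventually.of_forall hgbd)
  have hgabs : Integrable (fun y => g y * |h y|) π :=
    habsint.bdd_mul hgm.aestronglyMeasurable (Filter.Eventually.of_forall hgbd)
  have hg'abs : Integrable (fun y => g' y * |h y|) π :=
    habsint.bdd_mul hg'm.aestronglyMeasurable (Filter.Eventually.of_forall hg'bd)
  set A : ℝ := ∫ y, g y * h y ∂π with hA
  -- the integral appearing in Qf' |h|
  have hBeq : (∫ y, g' y * (|h| : Lp ℝ 2 π) y ∂π) = ∫ y, g' y * |h y| ∂π := by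
    refine integral_congr_ae ?_
    filter_upwards [Lp.coeFn_abs h] with y hy
    rw [hy]
  have hAB : |A| ≤ ∫ y, g' y * |h y| ∂π := by
    have h1 := norm_integral_le_integral_norm (μ := π) (fun y => g y * h y)
    rw [show (∫ y, ‖g y * h y‖ ∂π) = ∫ y, g y * |h y| ∂π from
      integral_congr_ae (Filter.Eventually.of_forall fun y => by
        simp [Real.norm_eq_abs, abs_mul, abs_of_pos (hgpos y)])] at h1
    rw [Real.norm_eq_abs] at h1
    calc |A| ≤ ∫ y, g y * |h y| ∂π := h1
      _ ≤ ∫ y, g' y * |h y| ∂π :=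
          integral_mono hgabs hg'abs fun y =>
            mul_le_mul_of_nonneg_right (hgle y) (abs_nonneg _)
  set B : ℝ := ∫ y, g' y * |h y| ∂π with hB
  have hBnn : 0 ≤ B := integral_nonneg fun y => mul_nonneg (hg'pos y).le (abs_nonneg _)
  have key : ‖Qf h‖ ≤ ‖Qf' |h|‖ := by
    refine Lp.norm_le_norm_of_ae_le ?_
    filter_upwards [hQf h, hQf' |h|, Lp.coeFn_abs h] with x hx hx' hxa
    rw [hx, hx', hxa, hBeq]
    rw [Real.norm_eq_abs, Real.norm_eq_abs]
    have h1 : |g x * ((1 - lam) * A + lam * g x * h x)|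
        ≤ g x * ((1 - lam) * |A| + lam * g x * |h x|) := by
      rw [abs_mul, abs_of_pos (hgpos x)]
      refine mul_le_mul_of_nonneg_left ?_ (hgpos x).le
      calc |(1 - lam) * A + lam * g x * h x|
          ≤ |(1 - lam) * A| + |lam * g x * h x| := abs_add_le _ _
        _ = (1 - lam) * |A| + lam * g x * |h x| := by
            rw [abs_mul, abs_mul, abs_mul, abs_of_nonneg (by linarith : (0:ℝ) ≤ 1 - lam),
              abs_of_nonneg hlam0, abs_of_pos (hgpos x)]
    have h2 : g x * ((1 - lam) * |A| + lam * g x * |h x|)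
        ≤ g' x * ((1 - lam) * B + lam * g' x * |h x|) := by
      have hinner : (1 - lam) * |A| + lam * g x * |h x|
          ≤ (1 - lam) * B + lam * g' x * |h x| := by
        have := mul_le_mul_of_nonneg_left hAB (by linarith : (0:ℝ) ≤ 1 - lam)
        have := mul_le_mul_of_nonneg_right
          (mul_le_mul_of_nonneg_left (hgle x) hlam0) (abs_nonneg (h x))
        linarith
      exact mul_le_mul (hgle x) hinner
        (add_nonneg (mul_nonneg (by linarith) (abs_nonneg _))
          (mul_nonneg (mul_nonneg hlam0 (hgpos x).le) (abs_nonneg _))) (hg'pos x).le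
    calc |g x * ((1 - lam) * A + lam * g x * h x)|
        ≤ g x * ((1 - lam) * |A| + lam * g x * |h x|) := h1
      _ ≤ g' x * ((1 - lam) * B + lam * g' x * |h x|) := h2
      _ ≤ |g' x * ((1 - lam) * B + lam * g' x * |h x|)| := le_abs_self _
  calc ‖Qf h‖ ≤ ‖Qf' |h|‖ := key
    _ ≤ ‖Qf'‖ * ‖(|h| : Lp ℝ 2 π)‖ := Qf'.le_opNorm _
    _ = ‖Qf'‖ * ‖h‖ := by rw [norm_abs_eq_norm]
end

section
/- Let $\pi$ be a probability measure, $0\le\lambda<1$, $t>0$, $f_k:\mathcal{X}\to[0,1]$ measurable, and let $r_{t,k}$, $g_k(x)=e^{tf_k(x)/2}/(r_{t,k}-\lambda e^{tf_k(x)})$ be as in the eigenvalue construction (so $\widehat{Q}_{t,k}g_k=r_{t,k}g_k$ and $0<C_1\le g_k\le C_2<\infty$ $\pi$-a.s.). Then $\lim_{n\to\infty}\frac{1}{n}\log\langle e^{tf_k/2},\widehat{Q}_{t,k}^{\,n-1}e^{tf_k/2}\rangle = \log r_{t,k}$. -/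
/-!
The function `g = w / (r - λ w²)`, with `w = e^{t f / 2}`, is a positive eigenfunction of `Q̂`
with eigenvalue `r`: the normalisation `∫ (1 - λ) w² / (r - λ w²) dπ = 1` is exactly what makes
the rank-one part of `Q̂ g` equal to `w`. Since `r - λ w²` lies between `δ = r - λ ‖w²‖_∞ > 0`
and `r`, we get `δ g ≤ w ≤ r g`; as `Q̂` is a positive operator, iterating gives
`δ rⁿ g ≤ Q̂ⁿ w ≤ rⁿ⁺¹ g`. Pairing with `w ≥ 0` squeezes `⟨w, Q̂ⁿ⁻¹ w⟩` between two constant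
multiples of `rⁿ`, so its `n`-th root tends to `r`.
-/

open MeasureTheory Filter

namespace Module.End

variable {R M : Type*} [CommSemiring R] [AddCommMonoid M] [Module R M] [Preorder M]
  {T : Module.End R M} {g v : M} {r a : R}

theorem smul_le_pow_apply_of_monotone (hT : Monotone T) (hg : T g = r • g) (hv : a • g ≤ v)
    (n : ℕ) : (a * r ^ n) • g ≤ (T ^ n) v := by
  induction n with
  | zero => simpa using hv
  | succ n ih =>
    calc (a * r ^ (n + 1)) • g = T ((a * r ^ n) • g) := by
          rw [map_smul, hg, smul_smul, pow_succ, mul_assoc]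
      _ ≤ (T ^ (n + 1)) v := by rw [pow_succ', mul_apply]; exact hT ih

theorem pow_apply_le_smul_of_monotone (hT : Monotone T) (hg : T g = r • g) (hv : v ≤ a • g)
    (n : ℕ) : (T ^ n) v ≤ (a * r ^ n) • g := by
  induction n with
  | zero => simpa using hv
  | succ n ih =>
    calc (T ^ (n + 1)) v = T ((T ^ n) v) := by rw [pow_succ', mul_apply]
      _ ≤ T ((a * r ^ n) • g) := hT ih
      _ = (a * r ^ (n + 1)) • g := by rw [map_smul, hg, smul_smul, pow_succ, mul_assoc]

end Module.End

theorem tendsto_log_div_of_pow_bounds {a : ℕ → ℝ} {A B r : ℝ} (hA : 0 < A) (hr : 0 < r)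
    (h : ∀ᶠ n in atTop, A * r ^ n ≤ a n ∧ a n ≤ B * r ^ n) :
    Tendsto (fun n : ℕ => Real.log (a n) / n) atTop (nhds (Real.log r)) := by
  have hlog : ∀ᶠ n : ℕ in atTop, Real.log A / n + Real.log r ≤ Real.log (a n) / n ∧
      Real.log (a n) / n ≤ Real.log B / n + Real.log r := by
    filter_upwards [h, eventually_gt_atTop 0] with n ⟨hlo, hhi⟩ hn
    have hn' : (0 : ℝ) < n := Nat.cast_pos.2 hn
    have hArn : 0 < A * r ^ n := by positivity
    have hB : 0 < B := pos_of_mul_pos_left (hArn.trans_le (hlo.trans hhi)) (pow_pos hr n).le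
    have hsplit : ∀ C : ℝ, 0 < C → Real.log C / n + Real.log r = Real.log (C * r ^ n) / n :=
      fun C hC => by rw [Real.log_mul hC.ne' (by positivity), Real.log_pow]; field_simp
    rw [hsplit A hA, hsplit B hB]
    exact ⟨div_le_div_of_nonneg_right (Real.log_le_log hArn hlo) hn'.le,
      div_le_div_of_nonneg_right (Real.log_le_log (hArn.trans_le hlo) hhi) hn'.le⟩
  have hlim : ∀ C : ℝ, Tendsto (fun n : ℕ => C / n + Real.log r) atTop (nhds (Real.log r)) :=
    fun C => by simpa using (tendsto_const_div_atTop_nhds_zero_nat C).add_const (Real.log r)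
  exact tendsto_of_tendsto_of_tendsto_of_le_of_le' (hlim _) (hlim _)
    (hlog.mono fun _ => And.left) (hlog.mono fun _ => And.right)

namespace MeasureTheory

variable {X : Type*} [MeasurableSpace X] {π : Measure X}

theorem L2.integral_mul_eq_inner_s12 (V h : Lp ℝ 2 π) : ∫ x, V x * h x ∂π = inner ℝ V h := by
  simp [L2.inner_def, mul_comm]

theorem L2.inner_le_inner_of_nonneg {V h k : Lp ℝ 2 π} (hV : 0 ≤ V) (hhk : h ≤ k) :
    inner ℝ V h ≤ inner ℝ V k := by
  rw [← sub_nonneg, ← inner_sub_right, ← integral_mul_eq_inner_s12]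
  have hV' := (Lp.coeFn_nonneg V).2 hV
  have hkh := (Lp.coeFn_nonneg (k - h)).2 (sub_nonneg.2 hhk)
  exact integral_nonneg_of_ae (by filter_upwards [hV', hkh] with x h1 h2 using mul_nonneg h1 h2)

theorem L2.inner_pow_apply_mem_Icc_of_monotone {T : Lp ℝ 2 π →L[ℝ] Lp ℝ 2 π} (hT : Monotone T)
    {G V : Lp ℝ 2 π} {r a b : ℝ} (hG : T G = r • G) (hV : 0 ≤ V) (ha : a • G ≤ V)
    (hb : V ≤ b • G) (n : ℕ) :
    a * r ^ n * inner ℝ V G ≤ inner ℝ V ((T ^ n) V) ∧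
      inner ℝ V ((T ^ n) V) ≤ b * r ^ n * inner ℝ V G := by
  have hpow : (T ^ n) V = ((T : Module.End ℝ (Lp ℝ 2 π)) ^ n) V := by
    rw [← ContinuousLinearMap.toLinearMap_pow]; rfl
  rw [hpow, ← inner_smul_right, ← inner_smul_right]
  exact ⟨inner_le_inner_of_nonneg hV (Module.End.smul_le_pow_apply_of_monotone hT hG ha n),
    inner_le_inner_of_nonneg hV (Module.End.pow_apply_le_smul_of_monotone hT hG hb n)⟩

theorem Lp.integrable_mul_of_ae_eq {W : Lp ℝ 2 π} {w : X → ℝ} (hW : W =ᵐ[π] w)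
    (h : Lp ℝ 2 π) : Integrable (fun x => w x * h x) π :=
  ((Lp.memLp W).integrable_mul (Lp.memLp h)).congr
    (by filter_upwards [hW] with x hx; rw [Pi.mul_apply, hx])

variable {w D : X → ℝ} {δ r lam : ℝ}

theorem memLp_div_of_le [IsFiniteMeasure π] {p : ENNReal} {B : ℝ} (hw : Measurable w)
    (hD : Measurable D) (hwB : ∀ x, |w x| ≤ B) (hδ : 0 < δ) (hDδ : ∀ᵐ x ∂π, δ ≤ D x) :
    MemLp (fun x => w x / D x) p π := by
  refine MemLp.of_bound (hw.div hD).aestronglyMeasurable (B / δ) ?_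
  filter_upwards [hDδ] with x hx
  rw [Real.norm_eq_abs, abs_div, abs_of_pos (hδ.trans_le hx)]
  exact div_le_div₀ ((abs_nonneg _).trans (hwB x)) (hwB x) hδ hx

theorem smul_le_and_le_smul_of_ae_eq_div {V G : Lp ℝ 2 π} (hV : V =ᵐ[π] w)
    (hG : G =ᵐ[π] fun x => w x / D x) (hw : ∀ x, 0 ≤ w x) (hδ : 0 < δ)
    (hD : ∀ᵐ x ∂π, δ ≤ D x ∧ D x ≤ r) : δ • G ≤ V ∧ V ≤ r • G := by
  rw [← Lp.coeFn_le, ← Lp.coeFn_le]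
  constructor <;>
  filter_upwards [hV, hG, hD, Lp.coeFn_smul δ G, Lp.coeFn_smul r G]
    with x hVx hGx ⟨hδD, hDr⟩ hδG hrG
  · rw [hδG, Pi.smul_apply, hGx, hVx, smul_eq_mul]
    calc δ * (w x / D x) ≤ D x * (w x / D x) :=
          mul_le_mul_of_nonneg_right hδD (div_nonneg (hw x) (hδ.trans_le hδD).le)
      _ = w x := mul_div_cancel₀ _ (hδ.trans_le hδD).ne'
  · rw [hrG, Pi.smul_apply, hGx, hVx, smul_eq_mul]
    calc w x = D x * (w x / D x) := (mul_div_cancel₀ _ (hδ.trans_le hδD).ne').symm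
      _ ≤ r * (w x / D x) :=
          mul_le_mul_of_nonneg_right hDr (div_nonneg (hw x) (hδ.trans_le hδD).le)

theorem ae_sub_mul_essSup_le_and_le {B : ℝ} (hw0 : ∀ x, 0 ≤ w x) (hwB : ∀ x, w x ≤ B)
    (hlam0 : 0 ≤ lam) :
    ∀ᵐ x ∂π, r - lam * essSup (fun x => w x ^ 2) π ≤ r - lam * w x ^ 2 ∧
      r - lam * w x ^ 2 ≤ r := by
  have hbdd : IsBoundedUnder (· ≤ ·) (ae π) fun x => w x ^ 2 :=
    isBoundedUnder_of ⟨B ^ 2, fun x => pow_le_pow_left₀ (hw0 x) (hwB x) 2⟩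
  filter_upwards [ae_le_essSup hbdd] with x hx
  exact ⟨sub_le_sub_left (mul_le_mul_of_nonneg_left hx hlam0) r,
    sub_le_self _ (mul_nonneg hlam0 (sq_nonneg _))⟩

theorem one_sub_mul_integral_mul_eq_one {G : Lp ℝ 2 π}
    (hG : G =ᵐ[π] fun x => w x / (r - lam * w x ^ 2))
    (hnorm : ∫ x, (1 - lam) * w x ^ 2 / (r - lam * w x ^ 2) ∂π = 1) :
    (1 - lam) * ∫ x, w x * G x ∂π = 1 := by
  rw [← integral_const_mul]
  refine (integral_congr_ae ?_).trans hnorm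
  filter_upwards [hG] with x hx
  rw [hx]; ring

/-- The operator `Q̂ = M_w Q M_w`, where `M_w` is multiplication by `w` and
`Q(x, ·) = (1 - λ) π + λ δ_x` is the kernel that restarts from `π` with probability `1 - λ`. -/
def IsTiltedRestartOperator (π : Measure X) (w : X → ℝ) (lam : ℝ)
    (T : Lp ℝ 2 π →L[ℝ] Lp ℝ 2 π) : Prop :=
  ∀ h : Lp ℝ 2 π, T h =ᵐ[π] fun x => w x * ((1 - lam) * ∫ y, w y * h y ∂π + lam * w x * h x)

namespace IsTiltedRestartOperator

variable {T : Lp ℝ 2 π →L[ℝ] Lp ℝ 2 π}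

theorem monotone (hT : IsTiltedRestartOperator π w lam T) (hw : ∀ x, 0 ≤ w x)
    (hwh : ∀ h : Lp ℝ 2 π, Integrable (fun x => w x * h x) π) (hlam0 : 0 ≤ lam)
    (hlam1 : lam ≤ 1) : Monotone T := by
  intro h k hhk
  rw [← Lp.coeFn_le] at hhk ⊢
  have hint : ∫ y, w y * h y ∂π ≤ ∫ y, w y * k y ∂π :=
    integral_mono_ae (hwh h) (hwh k) (hhk.mono fun x hx => mul_le_mul_of_nonneg_left hx (hw x))
  filter_upwards [hT h, hT k, hhk] with x hTh hTk hx
  rw [hTh, hTk]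
  exact mul_le_mul_of_nonneg_left
    (add_le_add (mul_le_mul_of_nonneg_left hint (sub_nonneg.2 hlam1))
      (mul_le_mul_of_nonneg_left hx (mul_nonneg hlam0 (hw x)))) (hw x)

theorem apply_eq_smul (hT : IsTiltedRestartOperator π w lam T) {G : Lp ℝ 2 π}
    (hG : G =ᵐ[π] fun x => w x / (r - lam * w x ^ 2)) (hD : ∀ᵐ x ∂π, r - lam * w x ^ 2 ≠ 0)
    (hnorm : ∫ x, (1 - lam) * w x ^ 2 / (r - lam * w x ^ 2) ∂π = 1) : T G = r • G := by
  refine Lp.ext ?_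
  filter_upwards [hT G, hG, hD, Lp.coeFn_smul r G] with x hTG hGx hDx hrG
  rw [hTG, hrG, one_sub_mul_integral_mul_eq_one hG hnorm, Pi.smul_apply, smul_eq_mul, hGx,
    mul_div_assoc', mul_div_assoc', one_add_div hDx, mul_div_assoc']
  congr 1
  ring

theorem tendsto_log_inner_pow_div [IsProbabilityMeasure π]
    (hT : IsTiltedRestartOperator π w lam T) {B : ℝ} (hw : Measurable w) (hw0 : ∀ x, 0 ≤ w x)
    (hwB : ∀ x, w x ≤ B) (hlam0 : 0 ≤ lam) (hlam1 : lam < 1)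
    (hr : lam * essSup (fun x => w x ^ 2) π < r)
    (hnorm : ∫ x, (1 - lam) * w x ^ 2 / (r - lam * w x ^ 2) ∂π = 1) {V : Lp ℝ 2 π}
    (hV : V =ᵐ[π] w) :
    Tendsto (fun n : ℕ => Real.log (inner ℝ V ((T ^ (n - 1)) V)) / n) atTop
      (nhds (Real.log r)) := by
  set δ := r - lam * essSup (fun x => w x ^ 2) π
  have hδ : 0 < δ := sub_pos.2 hr
  have hD := ae_sub_mul_essSup_le_and_le (π := π) (r := r) hw0 hwB hlam0
  have hr0 : 0 < r := let ⟨_, hx⟩ := hD.exists; hδ.trans_le (hx.1.trans hx.2)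
  have hGmem : MemLp (fun x => w x / (r - lam * w x ^ 2)) 2 π :=
    memLp_div_of_le hw (by fun_prop) (fun x => (abs_of_nonneg (hw0 x)).le.trans (hwB x)) hδ
      (hD.mono fun _ => And.left)
  set G := hGmem.toLp
  have hTG : T G = r • G :=
    hT.apply_eq_smul hGmem.coeFn_toLp (hD.mono fun _ hx => (hδ.trans_le hx.1).ne') hnorm
  have hmono : Monotone T := hT.monotone hw0 (Lp.integrable_mul_of_ae_eq hV) hlam0 hlam1.le
  obtain ⟨hδV, hVr⟩ := smul_le_and_le_smul_of_ae_eq_div hV hGmem.coeFn_toLp hw0 hδ hD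
  have hV0 : 0 ≤ V := (Lp.coeFn_nonneg V).1 (hV.mono fun x hx => hx ▸ hw0 x)
  have hVG : 0 < inner ℝ V G := by
    have h : (1 - lam) * inner ℝ V G = 1 := by
      rw [← L2.integral_mul_eq_inner_s12]
      refine Eq.trans ?_ (one_sub_mul_integral_mul_eq_one hGmem.coeFn_toLp hnorm)
      exact congrArg _ (integral_congr_ae (hV.mono fun x hx => congrArg (· * G x) hx))
    exact pos_of_mul_pos_right (by rw [h]; exact one_pos) (sub_nonneg.2 hlam1.le)
  refine tendsto_log_div_of_pow_bounds (A := δ * inner ℝ V G / r) (B := inner ℝ V G)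
    (by positivity) hr0 ?_
  filter_upwards [eventually_ge_atTop 1] with n hn
  obtain ⟨m, rfl⟩ := Nat.exists_eq_add_of_le' hn
  obtain ⟨hlo, hhi⟩ := L2.inner_pow_apply_mem_Icc_of_monotone hmono hTG hV0 hδV hVr m
  rw [Nat.add_sub_cancel]
  constructor
  · convert hlo using 1; field_simp; ring
  · convert hhi using 1; ring

end IsTiltedRestartOperator

end MeasureTheory

open MeasureTheory

theorem hoeffding_stmt12_general
    {X : Type*} [MeasurableSpace X] (π : Measure X) [IsProbabilityMeasure π]
    (fk : X → ℝ) (hfk : Measurable fk) (hfk01 : ∀ x, fk x ∈ Set.Icc (0 : ℝ) 1)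
    (lam : ℝ) (hlam0 : 0 ≤ lam) (hlam1 : lam < 1) (t : ℝ)
    (r : ℝ) (hr : r > lam * essSup (fun x => Real.exp (t * fk x)) π)
    (hreq : ∫ x, (1 - lam) * Real.exp (t * fk x) / (r - lam * Real.exp (t * fk x)) ∂π = 1)
    (Qhat : Lp ℝ 2 π →L[ℝ] Lp ℝ 2 π)
    (hQhat : ∀ h : Lp ℝ 2 π, Qhat h =ᵐ[π] fun x => Real.exp (t * fk x / 2) *
      ((1 - lam) * ∫ y, Real.exp (t * fk y / 2) * h y ∂π
        + lam * Real.exp (t * fk x / 2) * h x))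
    (V : Lp ℝ 2 π) (hV : V =ᵐ[π] fun x => Real.exp (t * fk x / 2)) :
    Tendsto (fun n : ℕ => Real.log (∫ x, V x * ((Qhat ^ (n - 1)) V) x ∂π) / n)
      atTop (nhds (Real.log r)) := by
  set w : X → ℝ := fun x => Real.exp (t * fk x / 2)
  have hwB : ∀ x, w x ≤ Real.exp (|t| / 2) := fun x => by
    refine Real.exp_le_exp.2 (div_le_div_of_nonneg_right ?_ zero_le_two)
    calc t * fk x ≤ |t| * fk x := mul_le_mul_of_nonneg_right (le_abs_self t) (hfk01 x).1
      _ ≤ |t| := mul_le_of_le_one_right (abs_nonneg t) (hfk01 x).2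
  have hsq : ∀ x, Real.exp (t * fk x) = w x ^ 2 := fun x => by
    rw [← Real.exp_nat_mul]; congr 1; push_cast; ring
  simp only [hsq] at hr hreq
  simp only [L2.integral_mul_eq_inner_s12]
  exact IsTiltedRestartOperator.tendsto_log_inner_pow_div hQhat (by fun_prop)
    (fun x => (Real.exp_pos _).le) hwB hlam0 hlam1 hr hreq hV

/-- Lemma 4.2(ii):
`(1/n) log ⟨e^{tf_k/2}, Q̂_{t,k}^{n-1} e^{tf_k/2}⟩ → log r_{t,k}`. -/
theorem hoeffding_stmt12
    {X : Type*} [MeasurableSpace X] (π : Measure X) [IsProbabilityMeasure π]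
    (fk : X → ℝ) (hfk : Measurable fk) (hfk01 : ∀ x, fk x ∈ Set.Icc (0 : ℝ) 1)
    (lam : ℝ) (hlam0 : 0 ≤ lam) (hlam1 : lam < 1) (t : ℝ) (ht : 0 < t)
    (r : ℝ) (hr : r > lam * essSup (fun x => Real.exp (t * fk x)) π)
    (hreq : ∫ x, (1 - lam) * Real.exp (t * fk x) / (r - lam * Real.exp (t * fk x)) ∂π = 1)
    (Qhat : Lp ℝ 2 π →L[ℝ] Lp ℝ 2 π)
    (hQhat : ∀ h : Lp ℝ 2 π, Qhat h =ᵐ[π] fun x => Real.exp (t * fk x / 2) *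
      ((1 - lam) * ∫ y, Real.exp (t * fk y / 2) * h y ∂π
        + lam * Real.exp (t * fk x / 2) * h x))
    (V : Lp ℝ 2 π) (hV : V =ᵐ[π] fun x => Real.exp (t * fk x / 2)) :
    Tendsto (fun n : ℕ => Real.log (∫ x, V x * ((Qhat ^ (n - 1)) V) x ∂π) / n)
      atTop (nhds (Real.log r)) :=
  hoeffding_stmt12_general π fk hfk hfk01 lam hlam0 hlam1 t r hr hreq Qhat hQhat V hV
end

section
/- Let $0<\mu<1$, $0\le\lambda<1$, and $\varepsilon>0$ with $\mu+\varepsilon<1$. Set $\bar\mu=1-\mu$ and $\Delta = 1+\frac{4\lambda(\mu+\varepsilon)(\bar\mu-\varepsilon)}{\mu\bar\mu(1-\lambda)^2}$. Then the following inequality holds: $\left[\frac{\mu+\bar\mu\lambda}{1-2\frac{\bar\mu-\varepsilon}{1+\sqrt{\Delta}}}\right]^{\mu+\varepsilon}\left[\frac{\bar\mu+\mu\lambda}{1-2\frac{\mu+\varepsilon}{1+\sqrt{\Delta}}}\right]^{\bar\mu-\varepsilon} \le \exp\left(-2\frac{1-\lambda}{1+\lambda}\varepsilon^2\right). -/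
/-!
Put `x = 2μ - 1`, `y = 2(μ + ε) - 1` and `κ = λ / (μ μ̄ (1 - λ)²)`. Then
`scale κ x = (1 - λ)/(1 + λ)`, `scale κ y = 1/√Δ`, and the four bases of the left-hand side are
`(1 ± z · scale κ z)/(1 + scale κ z)` for `z = x, y`. As `potential κ` has derivative `tilt κ`,
the logarithm of the left-hand side is `-(W y - W x - (y - x) W' x)` with `W = potential κ`:
minus a Bregman divergence. The derivative `scale κ z / (1 - z²)` of `tilt κ` is increasing on
`[0, 1)` and `tilt κ z ≥ z · scale κ z` there; with the parities of `W` and `tilt κ` this bounds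
the divergence below by `scale κ x · (y - x)² / 2 = 2 (1 - λ)/(1 + λ) ε²`. For `λ = 0` the
divergence is a binary relative entropy and the bound is Pinsker's inequality.
-/

open Real Set

theorem le_of_hasDerivAt_nonneg {f f' : ℝ → ℝ} {a b : ℝ} (hab : a ≤ b)
    (hf : ∀ x ∈ Icc a b, HasDerivAt f (f' x) x) (hf' : ∀ x ∈ Ioo a b, 0 ≤ f' x) : f a ≤ f b :=
  monotoneOn_of_hasDerivWithinAt_nonneg (convex_Icc a b)
    (fun x hx => (hf x hx).continuousAt.continuousWithinAt)
    (fun x hx => (hf x (interior_subset hx)).hasDerivWithinAt)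
    (fun x hx => hf' x (by rwa [interior_Icc] at hx)) (left_mem_Icc.2 hab) (right_mem_Icc.2 hab) hab

theorem binary_pinsker {m p : ℝ} (hm : m ∈ Ioo 0 1) (hp : p ∈ Ioo 0 1) :
    p * log (m / p) + (1 - p) * log ((1 - m) / (1 - p)) ≤ -(2 * (p - m) ^ 2) := by
  wlog hmp : m ≤ p generalizing m p
  · have := this (m := 1 - m) (p := 1 - p) ⟨by linarith [hm.2], by linarith [hm.1]⟩
      ⟨by linarith [hp.2], by linarith [hp.1]⟩ (by linarith)
    simp only [sub_sub_cancel] at this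
    linarith
  obtain ⟨hm0, hm1⟩ := hm
  obtain ⟨hp0, hp1⟩ := hp
  have key := le_of_hasDerivAt_nonneg (a := m) (b := p)
    (f := fun z => p * (log z - log p) + (1 - p) * (log (1 - z) - log (1 - p)) + 2 * (p - z) ^ 2)
    (f' := fun z => (p - z) * (1 - 2 * z) ^ 2 / (z * (1 - z))) hmp
    (fun z hz => by
      have hz0 : z ≠ 0 := by linarith [hz.1]
      have hz1 : 1 - z ≠ 0 := by linarith [hz.2]
      refine (((((hasDerivAt_log hz0).sub_const (log p)).const_mul p).add
        ((((hasDerivAt_id' z).const_sub 1).log hz1).sub_const (log (1 - p))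
          |>.const_mul (1 - p))).add (((hasDerivAt_id' z).const_sub p).pow 2 |>.const_mul 2))
        |>.congr_deriv ?_
      field_simp
      ring)
    (fun z hz => by
      have : 0 < 1 - z := by linarith [hz.2]
      have : 0 < z := by linarith [hz.1]
      have : 0 ≤ p - z := by linarith [hz.2]
      positivity)
  rw [log_div hm0.ne' hp0.ne', log_div (by linarith) (by linarith)]
  simp only [sub_self, mul_zero, add_zero, ne_eq, OfNat.ofNat_ne_zero, not_false_eq_true,
    zero_pow] at key
  linarith

namespace Real

variable {x : ℝ}

theorem artanh_eq_half_sub_log (hx : x ∈ Ioo (-1) 1) :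
    artanh x = (log (1 + x) - log (1 - x)) / 2 := by
  obtain ⟨h1, h2⟩ := hx
  rw [artanh_eq_half_log ⟨h1.le, h2.le⟩, log_div (by linarith) (by linarith)]
  ring

theorem artanh_neg_eq (x : ℝ) : artanh (-x) = -artanh x := by
  rw [artanh, artanh, ← log_inv, ← sqrt_inv, inv_div, sub_neg_eq_add, ← sub_eq_add_neg]

theorem hasDerivAt_artanh (hx : x ∈ Ioo (-1) 1) : HasDerivAt artanh (1 - x ^ 2)⁻¹ x := by
  obtain ⟨h1, h2⟩ := hx
  have h1x : 1 + x ≠ 0 := by linarith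
  have h2x : 1 - x ≠ 0 := by linarith
  have hlog := ((((hasDerivAt_id' x).const_add 1).log h1x).sub
    (((hasDerivAt_id' x).const_sub 1).log h2x)).div_const 2
  refine (hlog.congr_of_eventuallyEq ?_).congr_deriv ?_
  · filter_upwards [Ioo_mem_nhds h1 h2] with y hy using artanh_eq_half_sub_log hy
  · have : 1 - x ^ 2 ≠ 0 := by nlinarith
    field_simp
    ring

theorem le_artanh (h0 : 0 ≤ x) (h1 : x < 1) : x ≤ artanh x := by
  have := le_of_hasDerivAt_nonneg (f := fun y => artanh y - y) h0
    (fun y hy => (hasDerivAt_artanh ⟨by linarith [hy.1], by linarith [hy.2]⟩).sub (hasDerivAt_id y))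
    (fun y hy => by
      have : 0 < 1 - y ^ 2 := by nlinarith [hy.1, hy.2]
      simpa using one_le_inv_iff₀.2 ⟨this, by nlinarith [hy.1]⟩)
  simpa [artanh_zero] using this

end Real

namespace TwoStateChernoff

noncomputable def scale (κ x : ℝ) : ℝ := (√(1 + κ * (1 - x ^ 2)))⁻¹

noncomputable def tilt (κ x : ℝ) : ℝ := artanh (x * scale κ x)

noncomputable def potential (κ x : ℝ) : ℝ := x * tilt κ x - artanh (scale κ x)

variable {κ x y : ℝ}

@[simp] theorem scale_zero_left (x : ℝ) : scale 0 x = 1 := by simp [scale]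

@[simp] theorem scale_neg (κ x : ℝ) : scale κ (-x) = scale κ x := by simp [scale]

@[simp] theorem tilt_neg (κ x : ℝ) : tilt κ (-x) = -tilt κ x := by
  rw [tilt, tilt, scale_neg, neg_mul, artanh_neg_eq]

@[simp] theorem potential_neg (κ x : ℝ) : potential κ (-x) = potential κ x := by
  rw [potential, potential, tilt_neg, scale_neg, neg_mul_neg]

theorem one_add_mul_pos (hκ : 0 ≤ κ) (hx : x ∈ Ioo (-1) 1) : 0 < 1 + κ * (1 - x ^ 2) := by
  have : 0 < 1 - x ^ 2 := by nlinarith [hx.1, hx.2]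
  positivity

theorem scale_pos (hκ : 0 ≤ κ) (hx : x ∈ Ioo (-1) 1) : 0 < scale κ x :=
  inv_pos.2 (sqrt_pos.2 (one_add_mul_pos hκ hx))

theorem sq_scale_mul (hκ : 0 ≤ κ) (hx : x ∈ Ioo (-1) 1) :
    scale κ x ^ 2 * (1 + κ * (1 - x ^ 2)) = 1 := by
  rw [scale, inv_pow, sq_sqrt (one_add_mul_pos hκ hx).le, inv_mul_cancel₀ (one_add_mul_pos hκ hx).ne']

theorem scale_le_one (hκ : 0 ≤ κ) (hx : x ∈ Ioo (-1) 1) : scale κ x ≤ 1 := by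
  have : 0 ≤ κ * (1 - x ^ 2) := mul_nonneg hκ (by nlinarith [hx.1, hx.2])
  exact inv_le_one_of_one_le₀ (one_le_sqrt.2 (by linarith))

theorem scale_lt_one (hκ : 0 < κ) (hx : x ∈ Ioo (-1) 1) : scale κ x < 1 := by
  have : 0 < κ * (1 - x ^ 2) := mul_pos hκ (by nlinarith [hx.1, hx.2])
  exact inv_lt_one_of_one_lt₀ (lt_sqrt zero_le_one |>.2 (by linarith))

theorem scale_le_scale (hκ : 0 ≤ κ) (hx : 0 ≤ x) (hxy : x ≤ y) (hy : y < 1) :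
    scale κ x ≤ scale κ y := by
  have hy' : y ∈ Ioo (-1) 1 := ⟨by linarith, hy⟩
  refine inv_anti₀ (sqrt_pos.2 (one_add_mul_pos hκ hy')) (sqrt_le_sqrt ?_)
  nlinarith [mul_le_mul_of_nonneg_left (pow_le_pow_left₀ hx hxy 2) hκ]

theorem mul_scale_mem (hκ : 0 ≤ κ) (hx : x ∈ Ioo (-1) 1) : x * scale κ x ∈ Ioo (-1) 1 := by
  have h0 := scale_pos hκ hx
  have h1 := scale_le_one hκ hx
  constructor <;> nlinarith [hx.1, hx.2]

theorem hasDerivAt_scale (hκ : 0 ≤ κ) (hx : x ∈ Ioo (-1) 1) :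
    HasDerivAt (scale κ) (κ * x * scale κ x ^ 3) x := by
  have hQ := one_add_mul_pos hκ hx
  have hsqrt := ((((hasDerivAt_pow 2 x).const_sub 1).const_mul κ).const_add 1).sqrt hQ.ne'
  refine (hsqrt.inv (sqrt_pos.2 hQ).ne').congr_deriv ?_
  simp only [scale]
  field_simp
  norm_num

theorem hasDerivAt_tilt (hκ : 0 ≤ κ) (hx : x ∈ Ioo (-1) 1) :
    HasDerivAt (tilt κ) (scale κ x / (1 - x ^ 2)) x := by
  have hs := sq_scale_mul hκ hx
  have h1 : 1 - x ^ 2 ≠ 0 := by nlinarith [hx.1, hx.2]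
  have h2 : 1 - x ^ 2 * scale κ x ^ 2 ≠ 0 := by
    nlinarith [(mul_scale_mem hκ hx).1, (mul_scale_mem hκ hx).2]
  refine ((hasDerivAt_artanh (mul_scale_mem hκ hx)).comp x
    ((hasDerivAt_id' x).mul (hasDerivAt_scale hκ hx))).congr_deriv ?_
  field_simp
  linear_combination (scale κ x * x ^ 2) * hs

theorem hasDerivAt_potential (hκ : 0 < κ) (hx : x ∈ Ioo (-1) 1) :
    HasDerivAt (potential κ) (tilt κ x) x := by
  have hs := sq_scale_mul hκ.le hx
  have h1 : 1 - x ^ 2 ≠ 0 := by nlinarith [hx.1, hx.2]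
  have h2 : 1 - scale κ x ^ 2 ≠ 0 := by nlinarith [scale_pos hκ.le hx, scale_lt_one hκ hx]
  refine (((hasDerivAt_id' x).mul (hasDerivAt_tilt hκ.le hx)).sub
    ((hasDerivAt_artanh ⟨by linarith [scale_pos hκ.le hx], scale_lt_one hκ hx⟩).comp x
      (hasDerivAt_scale hκ.le hx))).congr_deriv ?_
  field_simp
  linear_combination (-(x * scale κ x)) * hs

@[simp] theorem tilt_zero (κ : ℝ) : tilt κ 0 = 0 := by simp [tilt]

theorem mul_scale_le_tilt (hκ : 0 ≤ κ) (hx : x ∈ Ico 0 1) : x * scale κ x ≤ tilt κ x :=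
  le_artanh (mul_nonneg hx.1 (scale_pos hκ ⟨by linarith [hx.1], hx.2⟩).le)
    (mul_scale_mem hκ ⟨by linarith [hx.1], hx.2⟩).2

theorem hasDerivAt_tilt_sub_mul (hκ : 0 ≤ κ) (c : ℝ) (hx : x ∈ Ioo (-1) 1) :
    HasDerivAt (fun z => tilt κ z - c * z) (scale κ x / (1 - x ^ 2) - c) x :=
  ((hasDerivAt_tilt hκ hx).sub ((hasDerivAt_id' x).const_mul c)).congr_deriv (by rw [mul_one])

theorem convexOn_tilt_sub_mul (hκ : 0 ≤ κ) (c : ℝ) :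
    ConvexOn ℝ (Ico 0 1) (fun z => tilt κ z - c * z) := by
  have hmem : ∀ z ∈ Ico (0 : ℝ) 1, z ∈ Ioo (-1) 1 := fun z hz => ⟨by linarith [hz.1], hz.2⟩
  refine MonotoneOn.convexOn_of_deriv (convex_Ico 0 1)
    (fun z hz => (hasDerivAt_tilt_sub_mul hκ c (hmem z hz)).continuousAt.continuousWithinAt)
    (fun z hz => ?_) (fun a ha b hb hab => ?_)
  · rw [interior_Ico] at hz
    exact (hasDerivAt_tilt_sub_mul hκ c (hmem z (Ioo_subset_Ico_self hz))).differentiableAt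
      |>.differentiableWithinAt
  · rw [interior_Ico] at ha hb
    rw [(hasDerivAt_tilt_sub_mul hκ c (hmem a (Ioo_subset_Ico_self ha))).deriv,
      (hasDerivAt_tilt_sub_mul hκ c (hmem b (Ioo_subset_Ico_self hb))).deriv]
    have : 0 < 1 - b ^ 2 := by nlinarith [hb.1, hb.2]
    gcongr ?_ / ?_ - c
    · exact (scale_pos hκ (hmem b (Ioo_subset_Ico_self hb))).le
    · exact scale_le_scale hκ ha.1.le hab hb.2
    · nlinarith [ha.1]

theorem tilt_sub_mul_le_of_le (hκ : 0 ≤ κ) (hx : 0 ≤ x) (hxy : x ≤ y) (hy : y < 1) :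
    tilt κ x - scale κ x * x ≤ tilt κ y - scale κ x * y := by
  refine le_of_hasDerivAt_nonneg hxy
    (fun z hz => hasDerivAt_tilt_sub_mul hκ _ ⟨by linarith [hz.1], by linarith [hz.2]⟩)
    (fun z hz => ?_)
  have hz' : z ∈ Ioo (-1) 1 := ⟨by linarith [hz.1], by linarith [hz.2]⟩
  have h1 : 0 < 1 - z ^ 2 := by nlinarith [hz.1, hz.2]
  have h2 : scale κ z ≤ scale κ z / (1 - z ^ 2) :=
    le_div_self (scale_pos hκ hz').le h1 (by nlinarith)
  linarith [scale_le_scale hκ hx hz.1.le (by linarith [hz.2])]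

theorem tilt_sub_mul_le_of_ge (hκ : 0 ≤ κ) (hy : 0 ≤ y) (hyx : y ≤ x) (hx : x < 1) :
    tilt κ y - scale κ x * y ≤ tilt κ x - scale κ x * x := by
  have hxIco : x ∈ Ico (0 : ℝ) 1 := ⟨hy.trans hyx, hx⟩
  have hseg : y ∈ segment ℝ 0 x := by rw [segment_eq_Icc hxIco.1]; exact ⟨hy, hyx⟩
  have hmax := (convexOn_tilt_sub_mul hκ (scale κ x)).le_on_segment ⟨le_rfl, one_pos⟩ hxIco hseg
  have hx0 : 0 ≤ tilt κ x - scale κ x * x := by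
    linarith [mul_scale_le_tilt hκ hxIco, mul_comm x (scale κ x)]
  simpa [max_eq_right hx0] using hmax

theorem tangent_add_sq_le_potential_of_nonneg (hκ : 0 < κ) (hx : x ∈ Ico 0 1)
    (hy : y ∈ Ico 0 1) :
    potential κ x + (y - x) * tilt κ x + scale κ x * (y - x) ^ 2 / 2 ≤ potential κ y := by
  set c := scale κ x
  have hG : ∀ z ∈ Ioo (-1 : ℝ) 1, HasDerivAt
      (fun z => potential κ z - (z - x) * tilt κ x - c * (z - x) ^ 2 / 2)
      ((tilt κ z - c * z) - (tilt κ x - c * x)) z := fun z hz => by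
    refine (((hasDerivAt_potential hκ hz).sub (((hasDerivAt_id' z).sub_const x).mul_const _)).sub
      ((((hasDerivAt_id' z).sub_const x).pow 2).const_mul c |>.div_const 2)).congr_deriv ?_
    ring
  have hIoo : ∀ z, 0 ≤ z → z < 1 → z ∈ Ioo (-1 : ℝ) 1 := fun z h0 h1 => ⟨by linarith, h1⟩
  rcases le_total x y with hxy | hyx
  · have := le_of_hasDerivAt_nonneg hxy
      (fun z hz => hG z (hIoo z (hx.1.trans hz.1) (hz.2.trans_lt hy.2)))
      (fun z hz => sub_nonneg.2 (tilt_sub_mul_le_of_le hκ.le hx.1 hz.1.le (hz.2.trans hy.2)))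
    simp only [sub_self, zero_mul, sub_zero, ne_eq, OfNat.ofNat_ne_zero, not_false_eq_true,
      zero_pow, mul_zero, zero_div] at this
    linarith
  · have := le_of_hasDerivAt_nonneg hyx
      (fun z hz => (hG z (hIoo z (hy.1.trans hz.1) (hz.2.trans_lt hx.2))).neg)
      (fun z hz => neg_nonneg.2 (sub_nonpos.2
        (tilt_sub_mul_le_of_ge hκ.le (hy.1.trans hz.1.le) hz.2.le hx.2)))
    simp only [Pi.neg_apply, neg_le_neg_iff, sub_self, zero_mul, sub_zero, ne_eq,
      OfNat.ofNat_ne_zero, not_false_eq_true, zero_pow, mul_zero, zero_div] at this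
    linarith

theorem tangent_add_sq_le_potential (hκ : 0 < κ) (hx : x ∈ Ioo (-1) 1) (hy : y ∈ Ioo (-1) 1) :
    potential κ x + (y - x) * tilt κ x + scale κ x * (y - x) ^ 2 / 2 ≤ potential κ y := by
  wlog hx0 : 0 ≤ x generalizing x y
  · have h := this (x := -x) (y := -y) ⟨by linarith [hx.2], by linarith [hx.1]⟩
      ⟨by linarith [hy.2], by linarith [hy.1]⟩ (by linarith)
    simp only [potential_neg, tilt_neg, scale_neg] at h
    linarith
  wlog hy0 : 0 ≤ y generalizing y
  · have h := this (y := -y) ⟨by linarith [hy.2], by linarith [hy.1]⟩ (by linarith)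
    rw [potential_neg] at h
    have := mul_scale_le_tilt hκ.le ⟨hx0, hx.2⟩
    nlinarith
  exact tangent_add_sq_le_potential_of_nonneg hκ ⟨hx0, hx.2⟩ ⟨hy0, hy.2⟩

theorem mul_log_add_mul_log_eq_potential (hκ : 0 < κ) (hx : x ∈ Ioo (-1) 1) (y : ℝ) :
    (1 + y) / 2 * log ((1 + x * scale κ x) / (1 + scale κ x)) +
        (1 - y) / 2 * log ((1 - x * scale κ x) / (1 + scale κ x)) =
      log ((1 + κ) / κ) / 2 + potential κ x + (y - x) * tilt κ x := by
  have hc : scale κ x ∈ Ioo (-1) 1 := ⟨by linarith [scale_pos hκ.le hx], scale_lt_one hκ hx⟩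
  have hxc := mul_scale_mem hκ.le hx
  have hprod : (1 + x * scale κ x) * (1 - x * scale κ x) * κ =
      (1 + κ) * ((1 + scale κ x) * (1 - scale κ x)) := by
    linear_combination sq_scale_mul hκ.le hx
  have hpos : ∀ z ∈ Ioo (-1 : ℝ) 1, 0 < 1 + z ∧ 0 < 1 - z := fun z hz =>
    ⟨by linarith [hz.1], by linarith [hz.2]⟩
  have hlog := congrArg log hprod
  rw [log_mul (by nlinarith [hpos _ hxc]) hκ.ne', log_mul (hpos _ hxc).1.ne' (hpos _ hxc).2.ne',
    log_mul (by linarith) (by nlinarith [hpos _ hc]), log_mul (hpos _ hc).1.ne' (hpos _ hc).2.ne']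
    at hlog
  rw [potential, tilt, artanh_eq_half_sub_log hxc, artanh_eq_half_sub_log hc,
    log_div (hpos _ hxc).1.ne' (hpos _ hc).1.ne', log_div (hpos _ hxc).2.ne' (hpos _ hc).1.ne',
    log_div (by linarith) hκ.ne']
  linear_combination hlog / 2

theorem chernoff_le_exp (hκ : 0 ≤ κ) (hx : x ∈ Ioo (-1) 1) (hy : y ∈ Ioo (-1) 1) :
    ((1 + x * scale κ x) / (1 + scale κ x) / ((1 + y * scale κ y) / (1 + scale κ y))) ^
          ((1 + y) / 2) *
        ((1 - x * scale κ x) / (1 + scale κ x) / ((1 - y * scale κ y) / (1 + scale κ y))) ^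
          ((1 - y) / 2) ≤
      exp (-(scale κ x * (y - x) ^ 2 / 2)) := by
  have hpos : ∀ z ∈ Ioo (-1 : ℝ) 1, 0 < (1 + z * scale κ z) / (1 + scale κ z) ∧
      0 < (1 - z * scale κ z) / (1 + scale κ z) := fun z hz => by
    obtain ⟨h1, h2⟩ := mul_scale_mem hκ hz
    have := scale_pos hκ hz
    exact ⟨div_pos (by linarith) (by linarith), div_pos (by linarith) (by linarith)⟩
  rw [rpow_def_of_pos (div_pos (hpos x hx).1 (hpos y hy).1),
    rpow_def_of_pos (div_pos (hpos x hx).2 (hpos y hy).2), ← exp_add, exp_le_exp]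
  rcases hκ.eq_or_lt with rfl | hκ
  · have h := binary_pinsker (m := (1 + x) / 2) (p := (1 + y) / 2)
      ⟨by linarith [hx.1], by linarith [hx.2]⟩ ⟨by linarith [hy.1], by linarith [hy.2]⟩
    rw [show 1 - (1 + x) / 2 = (1 - x) / 2 by ring, show 1 - (1 + y) / 2 = (1 - y) / 2 by ring]
      at h
    simp only [scale_zero_left, mul_one, one_add_one_eq_two]
    linear_combination h
  · rw [log_div (hpos x hx).1.ne' (hpos y hy).1.ne', log_div (hpos x hx).2.ne' (hpos y hy).2.ne']
    have hxlog := mul_log_add_mul_log_eq_potential hκ hx y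
    have hylog := mul_log_add_mul_log_eq_potential hκ hy y
    have := tangent_add_sq_le_potential hκ hx hy
    rw [sub_self, zero_mul, add_zero] at hylog
    linear_combination hxlog - hylog + this

end TwoStateChernoff

open TwoStateChernoff

/-- León–Perron analytic inequality: the optimized Chernoff bound for the
two-state chain is below the Hoeffding-type bound `exp(-2 ((1-λ)/(1+λ)) ε²)`. -/
theorem hoeffding_stmt16
    (μ lam ε : ℝ) (hμ0 : 0 < μ) (hμ1 : μ < 1) (hlam0 : 0 ≤ lam) (hlam1 : lam < 1)
    (hε : 0 < ε) (hμε : μ + ε < 1)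
    (μbar Δ : ℝ) (hμbar : μbar = 1 - μ)
    (hΔ : Δ = 1 + 4 * lam * (μ + ε) * (μbar - ε) / (μ * μbar * (1 - lam) ^ 2)) :
    ((μ + μbar * lam) / (1 - 2 * (μbar - ε) / (1 + Real.sqrt Δ))) ^ (μ + ε) *
      ((μbar + μ * lam) / (1 - 2 * (μ + ε) / (1 + Real.sqrt Δ))) ^ (μbar - ε)
    ≤ Real.exp (-2 * ((1 - lam) / (1 + lam)) * ε ^ 2) := by
  subst hμbar hΔ
  have hμ1' : 0 < 1 - μ := by linarith
  have hlam1' : 0 < 1 - lam := by linarith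
  set κ := lam / (μ * (1 - μ) * (1 - lam) ^ 2) with hκ_def
  set R := √(1 + 4 * lam * (μ + ε) * (1 - μ - ε) / (μ * (1 - μ) * (1 - lam) ^ 2))
  have hκ : 0 ≤ κ := div_nonneg hlam0 (by positivity)
  have hx : 2 * μ - 1 ∈ Ioo (-1) 1 := ⟨by linarith, by linarith⟩
  have hy : 2 * (μ + ε) - 1 ∈ Ioo (-1) 1 := ⟨by linarith, by linarith⟩
  have hscale_x : scale κ (2 * μ - 1) = (1 - lam) / (1 + lam) := by
    have : 1 + κ * (1 - (2 * μ - 1) ^ 2) = ((1 + lam) / (1 - lam)) ^ 2 := by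
      rw [hκ_def]
      field_simp
      ring
    rw [scale, this, sqrt_sq (by positivity), inv_div]
  have hscale_y : scale κ (2 * (μ + ε) - 1) = R⁻¹ := by
    rw [scale, hκ_def]
    congr 2
    field_simp
    ring
  have hR : 0 < R := inv_pos.1 (hscale_y ▸ scale_pos hκ hy)
  have h := chernoff_le_exp hκ hx hy
  rw [hscale_x, hscale_y] at h
  convert h using 4 <;> field_simp <;> ring
end
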